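/- Equivalence of the two linear-MAC rate region descriptions: Fix finite-valued (U_1,U_2,Y) with U_1 ⊥ U_2, X_k = x_k(U_k), and for a nonzero vector b ∈ F_q² let W_b = b_1 U_1 ⊕ b_2 U_2 and I_{CF,k}(b) = H(U_k) − H(W_b|Y). Fix linearly independent nonzero b,c ∈ F_q² and W_c = c_1 U_1 ⊕ c_2 U_2. Then the region R̂ = {(R_1,R_2) : min(R_1−H(U_1), R_2−H(U_2)) < I(W_b;Y)−H(W_b) and min(R_1−H(U_1), R_2−H(U_2)) < I(W_c;Y,W_b)−H(W_c)} equals R̂_1 ∪ R̂_2, where R̂_1 = {(R_1,R_2): R_1 < min(I_{CF,1}(b), I(X_1,X_2;Y) − I_{CF,2}(b))} and R̂_2 = {(R_1,R_2): R_2 < min(I_{CF,2}(b), I(X_1,X_2;Y) − I_{CF,1}(b))}. A key identity used is H(U_1) + I(W_c;Y,W_b) − H(W_c) = I(X_1,X_2;Y) − I_{CF,2}(b), which relies on the chain rule H(W_b,W_c|Y) = H(U_1,U_2|Y) (since (b,c) invertible) and the Markov relations U_k → X_k → Y giving I(U_1,U_2;Y) = I(X_1,X_2;Y). -/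

import Mathlib

open scoped BigOperators

/-- Shannon entropy (base 2) of a pmf on a finite type. -/
noncomputable def Hent {β : Type*} [Fintype β] (f : β → ℝ) : ℝ :=
  - ∑ z, f z * Real.logb 2 (f z)

section

variable {F 𝒳₁ 𝒳₂ 𝒴 : Type*} [Field F] [Fintype F] [DecidableEq F]
  [Fintype 𝒳₁] [DecidableEq 𝒳₁] [Fintype 𝒳₂] [DecidableEq 𝒳₂] [Fintype 𝒴]
  (pU1 pU2 : F → ℝ) (x1 : F → 𝒳₁) (x2 : F → 𝒳₂) (Ch : 𝒳₁ → 𝒳₂ → 𝒴 → ℝ)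

/-- Joint pmf of `(U₁, U₂, Y)`: `U₁ ⊥ U₂`, `X_k = x_k(U_k)` and the channel acts
on `(X₁, X₂)`. -/
noncomputable def jointP (u1 u2 : F) (y : 𝒴) : ℝ :=
  pU1 u1 * pU2 u2 * Ch (x1 u1) (x2 u2) y

/-- Marginal pmf of the channel output `Y`. -/
noncomputable def pYm (y : 𝒴) : ℝ := ∑ u1, ∑ u2, jointP pU1 pU2 x1 x2 Ch u1 u2 y

/-- Pmf of the linear combination `W_b = b₁U₁ ⊕ b₂U₂`. -/
noncomputable def pWm (b : Fin 2 → F) (w : F) : ℝ :=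
  ∑ u1, ∑ u2, if b 0 * u1 + b 1 * u2 = w then pU1 u1 * pU2 u2 else 0

/-- Joint pmf of `(W_b, Y)`. -/
noncomputable def pWYm (b : Fin 2 → F) (z : F × 𝒴) : ℝ :=
  ∑ u1, ∑ u2, if b 0 * u1 + b 1 * u2 = z.1 then
    jointP pU1 pU2 x1 x2 Ch u1 u2 z.2 else 0

/-- Joint pmf of `(W_b, W_c, Y)`. -/
noncomputable def pWWYm (b c : Fin 2 → F) (z : F × F × 𝒴) : ℝ :=
  ∑ u1, ∑ u2, if b 0 * u1 + b 1 * u2 = z.1 ∧ c 0 * u1 + c 1 * u2 = z.2.1 then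
    jointP pU1 pU2 x1 x2 Ch u1 u2 z.2.2 else 0

/-- Joint pmf of `(X₁, X₂)`. -/
noncomputable def pXXm (s : 𝒳₁ × 𝒳₂) : ℝ :=
  ∑ u1, ∑ u2, if x1 u1 = s.1 ∧ x2 u2 = s.2 then pU1 u1 * pU2 u2 else 0

/-- Joint pmf of `(X₁, X₂, Y)`. -/
noncomputable def pXXYm (s : 𝒳₁ × 𝒳₂ × 𝒴) : ℝ :=
  ∑ u1, ∑ u2, if x1 u1 = s.1 ∧ x2 u2 = s.2.1 then
    jointP pU1 pU2 x1 x2 Ch u1 u2 s.2.2 else 0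

end

/-!
Since `b` and `c` are linearly independent, `(W_b, W_c, Y)` is a relabelling of `(U₁, U₂, Y)`,
so by the chain rule and independence `H(W_b, W_c, Y) = H(U₁) + H(U₂) + H(Y | X₁, X₂)`, while
the chain rule also gives `H(X₁, X₂, Y) = H(X₁, X₂) + H(Y | X₁, X₂)`. Subtracting yields the key
identity. With it, both bounds defining `R̂ₖ` become
`H(Uₖ) + min(I(W_b;Y) − H(W_b), I(W_c;Y,W_b) − H(W_c))`, and `R̂ = R̂₁ ∪ R̂₂` reduces to
`min x y < m ↔ x < m ∨ y < m`.
-/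

section Entropy

variable {α β : Type*} [Fintype α] [Fintype β]

-- Holds for all reals, including `0`, because `logb b 0 = 0`.
theorem mul_mul_logb_mul (b x y : ℝ) :
    x * y * Real.logb b (x * y) = y * (x * Real.logb b x) + x * (y * Real.logb b y) := by
  rcases eq_or_ne x 0 with rfl | hx
  · simp
  rcases eq_or_ne y 0 with rfl | hy
  · simp
  rw [Real.logb_mul hx hy]
  ring

theorem Hent_comp_equiv (e : α ≃ β) (f : β → ℝ) : Hent (f ∘ e) = Hent f := by
  simp only [Hent, Function.comp_apply, Equiv.sum_comp e (fun z => f z * Real.logb 2 (f z))]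

theorem Hent_mul_kernel (p : α → ℝ) (κ : α → β → ℝ) (hκ : ∀ a, ∑ y, κ a y = 1) :
    Hent (fun z : α × β => p z.1 * κ z.1 z.2) = Hent p + ∑ a, p a * Hent (κ a) := by
  have hfiber : ∀ a, ∑ y, p a * κ a y * Real.logb 2 (p a * κ a y)
      = p a * Real.logb 2 (p a) - p a * Hent (κ a) := by
    intro a
    simp only [mul_mul_logb_mul, Finset.sum_add_distrib, ← Finset.sum_mul, ← Finset.mul_sum,
      hκ, Hent]
    ring
  simp only [Hent, Fintype.sum_prod_type, hfiber, Finset.sum_sub_distrib]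
  ring

theorem Hent_mul_of_sum_eq_one (p : α → ℝ) (q : β → ℝ) (hp : ∑ a, p a = 1)
    (hq : ∑ b, q b = 1) :
    Hent (fun z : α × β => p z.1 * q z.2) = Hent p + Hent q := by
  rw [Hent_mul_kernel p (fun _ => q) (fun _ => hq), ← Finset.sum_mul, hp, one_mul]

end Entropy

theorem linComb_injective {F : Type*} [Field F] (b c : Fin 2 → F)
    (hbc : b 0 * c 1 ≠ b 1 * c 0) :
    Function.Injective fun u : F × F => (b 0 * u.1 + b 1 * u.2, c 0 * u.1 + c 1 * u.2) := by
  rintro ⟨u1, u2⟩ ⟨v1, v2⟩ h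
  simp only [Prod.mk.injEq] at h
  have hdet : b 0 * c 1 - b 1 * c 0 ≠ 0 := sub_ne_zero.mpr hbc
  have h1 : (b 0 * c 1 - b 1 * c 0) * (u1 - v1) = 0 := by linear_combination c 1 * h.1 - b 1 * h.2
  have h2 : (b 0 * c 1 - b 1 * c 0) * (u2 - v2) = 0 := by linear_combination b 0 * h.2 - c 0 * h.1
  simp only [mul_eq_zero, hdet, false_or, sub_eq_zero] at h1 h2
  rw [h1, h2]

theorem setOf_min_lt_and_min_lt (a₁ a₂ A B : ℝ) :
    {r : ℝ × ℝ | min (r.1 - a₁) (r.2 - a₂) < A ∧ min (r.1 - a₁) (r.2 - a₂) < B} =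
      {r | r.1 < min (a₁ + A) (a₁ + B)} ∪ {r | r.2 < min (a₂ + A) (a₂ + B)} := by
  ext r
  simp only [Set.mem_ofPred_eq, Set.mem_union, min_add_add_left, ← sub_lt_iff_lt_add']
  rw [← lt_min_iff, min_lt_iff]

section LinearMAC

variable {F 𝒳₁ 𝒳₂ 𝒴 : Type*} [Fintype F]
  (pU1 pU2 : F → ℝ) (x1 : F → 𝒳₁) (x2 : F → 𝒳₂) (Ch : 𝒳₁ → 𝒳₂ → 𝒴 → ℝ)

theorem Hent_pWWYm [Field F] [DecidableEq F] [Fintype 𝒴] (b c : Fin 2 → F)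
    (hbc : b 0 * c 1 ≠ b 1 * c 0) :
    Hent (pWWYm pU1 pU2 x1 x2 Ch b c) =
      Hent (fun z : (F × F) × 𝒴 => pU1 z.1.1 * pU2 z.1.2 * Ch (x1 z.1.1) (x2 z.1.2) z.2) := by
  have hL := linComb_injective b c hbc
  rw [← Hent_comp_equiv (((Equiv.ofBijective _ hL.bijective_of_finite).prodCongr
    (Equiv.refl 𝒴)).trans (Equiv.prodAssoc F F 𝒴))]
  congr 1
  funext ⟨⟨u1, u2⟩, y⟩
  have hcond : ∀ v1 v2, (b 0 * v1 + b 1 * v2 = b 0 * u1 + b 1 * u2 ∧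
      c 0 * v1 + c 1 * v2 = c 0 * u1 + c 1 * u2) ↔ v1 = u1 ∧ v2 = u2 := fun v1 v2 => by
    simpa using hL.eq_iff (a := (v1, v2)) (b := (u1, u2))
  simp [pWWYm, jointP, hcond, ite_and]

theorem Hent_jointP [Fintype 𝒴] (hpU1s : ∑ u, pU1 u = 1) (hpU2s : ∑ u, pU2 u = 1)
    (hCh1 : ∀ s1 s2, ∑ y, Ch s1 s2 y = 1) :
    Hent (fun z : (F × F) × 𝒴 => pU1 z.1.1 * pU2 z.1.2 * Ch (x1 z.1.1) (x2 z.1.2) z.2) =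
      Hent pU1 + Hent pU2 + ∑ u : F × F, pU1 u.1 * pU2 u.2 * Hent (Ch (x1 u.1) (x2 u.2)) := by
  rw [Hent_mul_kernel (fun u : F × F => pU1 u.1 * pU2 u.2) (fun u => Ch (x1 u.1) (x2 u.2))
    (fun _ => hCh1 _ _), Hent_mul_of_sum_eq_one pU1 pU2 hpU1s hpU2s]

theorem pXXYm_eq_mul [DecidableEq 𝒳₁] [DecidableEq 𝒳₂] (s : 𝒳₁ × 𝒳₂ × 𝒴) :
    pXXYm pU1 pU2 x1 x2 Ch s = pXXm pU1 pU2 x1 x2 (s.1, s.2.1) * Ch s.1 s.2.1 s.2.2 := by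
  simp only [pXXYm, pXXm, jointP, Finset.sum_mul, ite_mul, zero_mul]
  refine Finset.sum_congr rfl fun u1 _ => Finset.sum_congr rfl fun u2 _ => ?_
  split_ifs with h
  · rw [h.1, h.2]
  · rfl

theorem sum_pXXm_mul [Fintype 𝒳₁] [DecidableEq 𝒳₁] [Fintype 𝒳₂] [DecidableEq 𝒳₂]
    (g : 𝒳₁ × 𝒳₂ → ℝ) :
    ∑ s, pXXm pU1 pU2 x1 x2 s * g s = ∑ u : F × F, pU1 u.1 * pU2 u.2 * g (x1 u.1, x2 u.2) := by
  simp only [pXXm, Finset.sum_mul, ite_mul, zero_mul]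
  rw [Finset.sum_comm, Fintype.sum_prod_type]
  refine Finset.sum_congr rfl fun u1 _ => ?_
  rw [Finset.sum_comm]
  refine Finset.sum_congr rfl fun u2 _ => ?_
  simp [Fintype.sum_prod_type, ite_and]

theorem Hent_pXXYm [Fintype 𝒳₁] [DecidableEq 𝒳₁] [Fintype 𝒳₂] [DecidableEq 𝒳₂] [Fintype 𝒴]
    (hCh1 : ∀ s1 s2, ∑ y, Ch s1 s2 y = 1) :
    Hent (pXXYm pU1 pU2 x1 x2 Ch) =
      Hent (pXXm pU1 pU2 x1 x2) + ∑ u : F × F, pU1 u.1 * pU2 u.2 * Hent (Ch (x1 u.1) (x2 u.2)) := by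
  have hreassoc : pXXYm pU1 pU2 x1 x2 Ch ∘ Equiv.prodAssoc 𝒳₁ 𝒳₂ 𝒴 =
      fun z => pXXm pU1 pU2 x1 x2 z.1 * Ch z.1.1 z.1.2 z.2 :=
    funext fun _ => pXXYm_eq_mul pU1 pU2 x1 x2 Ch _
  rw [← Hent_comp_equiv (Equiv.prodAssoc 𝒳₁ 𝒳₂ 𝒴), hreassoc,
    Hent_mul_kernel _ (fun s : 𝒳₁ × 𝒳₂ => Ch s.1 s.2) (fun _ => hCh1 _ _), sum_pXXm_mul]

theorem Hent_pWWYm_add_Hent_pXXm [Field F] [DecidableEq F] [Fintype 𝒳₁] [DecidableEq 𝒳₁]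
    [Fintype 𝒳₂] [DecidableEq 𝒳₂] [Fintype 𝒴] (hpU1s : ∑ u, pU1 u = 1)
    (hpU2s : ∑ u, pU2 u = 1) (hCh1 : ∀ s1 s2, ∑ y, Ch s1 s2 y = 1) (b c : Fin 2 → F)
    (hbc : b 0 * c 1 ≠ b 1 * c 0) :
    Hent (pWWYm pU1 pU2 x1 x2 Ch b c) + Hent (pXXm pU1 pU2 x1 x2) =
      Hent pU1 + Hent pU2 + Hent (pXXYm pU1 pU2 x1 x2 Ch) := by
  rw [Hent_pWWYm pU1 pU2 x1 x2 Ch b c hbc, Hent_jointP pU1 pU2 x1 x2 Ch hpU1s hpU2s hCh1,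
    Hent_pXXYm pU1 pU2 x1 x2 Ch hCh1]
  ring

end LinearMAC

section

variable {F 𝒳₁ 𝒳₂ 𝒴 : Type*} [Field F] [Fintype F] [DecidableEq F]
  [Fintype 𝒳₁] [DecidableEq 𝒳₁] [Fintype 𝒳₂] [DecidableEq 𝒳₂] [Fintype 𝒴]
  (pU1 pU2 : F → ℝ) (x1 : F → 𝒳₁) (x2 : F → 𝒳₂) (Ch : 𝒳₁ → 𝒳₂ → 𝒴 → ℝ)

theorem stmt_19
    (hpU1s : ∑ u, pU1 u = 1)
    (hpU2s : ∑ u, pU2 u = 1)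
    (hCh1 : ∀ s1 s2, ∑ y, Ch s1 s2 y = 1)
    (b c : Fin 2 → F) (hbc : b 0 * c 1 ≠ b 1 * c 0) :
    {r : ℝ × ℝ |
        min (r.1 - Hent pU1) (r.2 - Hent pU2) <
          (Hent (pWm pU1 pU2 b) + Hent (pYm pU1 pU2 x1 x2 Ch)
            - Hent (pWYm pU1 pU2 x1 x2 Ch b)) - Hent (pWm pU1 pU2 b) ∧
        min (r.1 - Hent pU1) (r.2 - Hent pU2) <
          (Hent (pWm pU1 pU2 c) + Hent (pWYm pU1 pU2 x1 x2 Ch b)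
            - Hent (pWWYm pU1 pU2 x1 x2 Ch b c)) - Hent (pWm pU1 pU2 c)} =
      {r : ℝ × ℝ | r.1 <
          min (Hent pU1 - (Hent (pWYm pU1 pU2 x1 x2 Ch b) - Hent (pYm pU1 pU2 x1 x2 Ch)))
            ((Hent (pXXm pU1 pU2 x1 x2) + Hent (pYm pU1 pU2 x1 x2 Ch)
                - Hent (pXXYm pU1 pU2 x1 x2 Ch))
              - (Hent pU2 - (Hent (pWYm pU1 pU2 x1 x2 Ch b)
                  - Hent (pYm pU1 pU2 x1 x2 Ch))))} ∪
      {r : ℝ × ℝ | r.2 <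
          min (Hent pU2 - (Hent (pWYm pU1 pU2 x1 x2 Ch b) - Hent (pYm pU1 pU2 x1 x2 Ch)))
            ((Hent (pXXm pU1 pU2 x1 x2) + Hent (pYm pU1 pU2 x1 x2 Ch)
                - Hent (pXXYm pU1 pU2 x1 x2 Ch))
              - (Hent pU1 - (Hent (pWYm pU1 pU2 x1 x2 Ch b)
                  - Hent (pYm pU1 pU2 x1 x2 Ch))))} ∧
      Hent pU1 + (Hent (pWm pU1 pU2 c) + Hent (pWYm pU1 pU2 x1 x2 Ch b)
          - Hent (pWWYm pU1 pU2 x1 x2 Ch b c)) - Hent (pWm pU1 pU2 c)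
        = (Hent (pXXm pU1 pU2 x1 x2) + Hent (pYm pU1 pU2 x1 x2 Ch)
            - Hent (pXXYm pU1 pU2 x1 x2 Ch))
          - (Hent pU2 - (Hent (pWYm pU1 pU2 x1 x2 Ch b)
              - Hent (pYm pU1 pU2 x1 x2 Ch))) := by
  have key := Hent_pWWYm_add_Hent_pXXm pU1 pU2 x1 x2 Ch hpU1s hpU2s hCh1 b c hbc
  refine ⟨?_, by linarith⟩
  rw [setOf_min_lt_and_min_lt]
  congr! 3 with r <;> congr! 2 <;> linarith

end
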